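/- arXiv:math/0702217 — 4 statements merged into one kernel-verified Lean document; each statement's English description precedes it below -/
import Mathlib

section
/- If A and B are complex n×n positive semidefinite matrices, then Tr(BA⁵B + ABA³BA + A²BAB A²) ≥ 0; equivalently Tr(S_{7,2}(A,B)) = 7·Tr(BA⁵B + AB A³BA + A²BABA²) is nonnegative, where S_{7,2} is the sum of all words of length 7 in A,B containing B exactly twice. -/
open Matrix ComplexOrder

noncomputable def hurwitz (p r : ℕ) {n : ℕ} (A B : Matrix (Fin n) (Fin n) ℂ) :
    Matrix (Fin n) (Fin n) ℂ :=
  ∑ w ∈ Finset.univ.filter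
      (fun w : Fin p → Bool => (Finset.univ.filter (fun i => w i = true)).card = r),
    (List.ofFn (fun i : Fin p => if w i then B else A)).prod

private lemma rotL {n : ℕ} (X1 X2 X3 X4 X5 X6 X7 : Matrix (Fin n) (Fin n) ℂ) :
    (X1*(X2*(X3*(X4*(X5*(X6*X7)))))).trace = (X2*(X3*(X4*(X5*(X6*(X7*X1)))))).trace := by
  rw [Matrix.trace_mul_comm]
  simp only [mul_assoc]

private lemma trPSD {n : ℕ} {M : Matrix (Fin n) (Fin n) ℂ} (h : M.PosSemidef) :
    0 ≤ M.trace := by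
  rw [Matrix.trace]
  apply Finset.sum_nonneg
  intro i _
  exact h.diag_nonneg

open scoped MatrixOrder in
theorem trace_S72_nonneg {n : ℕ} (A B : Matrix (Fin n) (Fin n) ℂ)
    (hA : A.PosSemidef) (hB : B.PosSemidef) :
    (hurwitz 7 2 A B).trace =
      7 * (B * A * A * A * A * A * B + A * B * A * A * A * B * A
            + A * A * B * A * B * A * A).trace ∧
    0 ≤ (B * A * A * A * A * A * B + A * B * A * A * A * B * A
            + A * A * B * A * B * A * A).trace := by
  constructor
  · have e : (Finset.univ.filter
        (fun w : Fin 7 → Bool => (Finset.univ.filter (fun i => w i = true)).card = 2))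
        = ([![true, true, false, false, false, false, false],
        ![true, false, true, false, false, false, false],
        ![true, false, false, true, false, false, false],
        ![true, false, false, false, true, false, false],
        ![true, false, false, false, false, true, false],
        ![true, false, false, false, false, false, true],
        ![false, true, true, false, false, false, false],
        ![false, true, false, true, false, false, false],
        ![false, true, false, false, true, false, false],
        ![false, true, false, false, false, true, false],
        ![false, true, false, false, false, false, true],
        ![false, false, true, true, false, false, false],
        ![false, false, true, false, true, false, false],
        ![false, false, true, false, false, true, false],
        ![false, false, true, false, false, false, true],
        ![false, false, false, true, true, false, false],
        ![false, false, false, true, false, true, false],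
        ![false, false, false, true, false, false, true],
        ![false, false, false, false, true, true, false],
        ![false, false, false, false, true, false, true],
        ![false, false, false, false, false, true, true]] : List (Fin 7 → Bool)).toFinset := by decide
    unfold hurwitz
    rw [e, List.sum_toFinset _ (by decide)]
    simp only [List.map_cons, List.map_nil, List.sum_cons, List.sum_nil, List.ofFn_succ,
      List.ofFn_zero, List.prod_cons, List.prod_nil, Matrix.cons_val_zero, Matrix.cons_val_succ,
      Bool.false_eq_true, if_true, if_false, mul_one, add_zero, Matrix.trace_add, mul_assoc]
    have h0 : (B * (B * (A * (A * (A * (A * (A))))))).trace = (B * (A * (A * (A * (A * (A * (B))))))).trace := by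
      rw [rotL]
    have h1 : (B * (A * (B * (A * (A * (A * (A))))))).trace = (A * (A * (B * (A * (B * (A * (A))))))).trace := by
      rw [rotL, rotL, rotL, rotL, rotL]
    have h2 : (B * (A * (A * (B * (A * (A * (A))))))).trace = (A * (B * (A * (A * (A * (B * (A))))))).trace := by
      rw [rotL, rotL]
    have h3 : (B * (A * (A * (A * (B * (A * (A))))))).trace = (A * (B * (A * (A * (A * (B * (A))))))).trace := by
      rw [rotL, rotL, rotL, rotL, rotL, rotL]
    have h4 : (B * (A * (A * (A * (A * (B * (A))))))).trace = (A * (A * (B * (A * (B * (A * (A))))))).trace := by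
      rw [rotL, rotL, rotL]
    have h6 : (A * (B * (B * (A * (A * (A * (A))))))).trace = (B * (A * (A * (A * (A * (A * (B))))))).trace := by
      rw [rotL, rotL]
    have h7 : (A * (B * (A * (B * (A * (A * (A))))))).trace = (A * (A * (B * (A * (B * (A * (A))))))).trace := by
      rw [rotL, rotL, rotL, rotL, rotL, rotL]
    have h8 : (A * (B * (A * (A * (B * (A * (A))))))).trace = (A * (B * (A * (A * (A * (B * (A))))))).trace := by
      rw [rotL, rotL, rotL]
    have h10 : (A * (B * (A * (A * (A * (A * (B))))))).trace = (A * (A * (B * (A * (B * (A * (A))))))).trace := by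
      rw [rotL, rotL, rotL, rotL]
    have h11 : (A * (A * (B * (B * (A * (A * (A))))))).trace = (B * (A * (A * (A * (A * (A * (B))))))).trace := by
      rw [rotL, rotL, rotL]
    have h13 : (A * (A * (B * (A * (A * (B * (A))))))).trace = (A * (B * (A * (A * (A * (B * (A))))))).trace := by
      rw [rotL, rotL, rotL, rotL]
    have h14 : (A * (A * (B * (A * (A * (A * (B))))))).trace = (A * (B * (A * (A * (A * (B * (A))))))).trace := by
      rw [rotL]
    have h15 : (A * (A * (A * (B * (B * (A * (A))))))).trace = (B * (A * (A * (A * (A * (A * (B))))))).trace := by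
      rw [rotL, rotL, rotL, rotL]
    have h16 : (A * (A * (A * (B * (A * (B * (A))))))).trace = (A * (A * (B * (A * (B * (A * (A))))))).trace := by
      rw [rotL]
    have h17 : (A * (A * (A * (B * (A * (A * (B))))))).trace = (A * (B * (A * (A * (A * (B * (A))))))).trace := by
      rw [rotL, rotL, rotL, rotL, rotL]
    have h18 : (A * (A * (A * (A * (B * (B * (A))))))).trace = (B * (A * (A * (A * (A * (A * (B))))))).trace := by
      rw [rotL, rotL, rotL, rotL, rotL]
    have h19 : (A * (A * (A * (A * (B * (A * (B))))))).trace = (A * (A * (B * (A * (B * (A * (A))))))).trace := by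
      rw [rotL, rotL]
    have h20 : (A * (A * (A * (A * (A * (B * (B))))))).trace = (B * (A * (A * (A * (A * (A * (B))))))).trace := by
      rw [rotL, rotL, rotL, rotL, rotL, rotL]
    rw [h0, h1, h2, h3, h4, h6, h7, h8, h10, h11, h13, h14, h15, h16, h17, h18, h19, h20]
    ring
  · have h1 : (B * A * A * A * A * A * B).PosSemidef := by
      have h := Matrix.posSemidef_self_mul_conjTranspose
        (B * CFC.sqrt A * CFC.sqrt A * CFC.sqrt A * CFC.sqrt A * CFC.sqrt A)
      rw [← CFC.sqrt_mul_sqrt_self A hA.nonneg]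
      simpa only [Matrix.conjTranspose_mul, (CFC.sqrt_nonneg A).posSemidef.1.eq, hB.1.eq, mul_assoc] using h
    have h2 : (A * B * A * A * A * B * A).PosSemidef := by
      have h := Matrix.posSemidef_self_mul_conjTranspose
        (A * B * CFC.sqrt A * CFC.sqrt A * CFC.sqrt A)
      rw [show A * B * A * A * A * B * A
          = A * B * (CFC.sqrt A * CFC.sqrt A) * (CFC.sqrt A * CFC.sqrt A) * (CFC.sqrt A * CFC.sqrt A) * B * A by
        rw [CFC.sqrt_mul_sqrt_self A hA.nonneg]]
      simpa only [Matrix.conjTranspose_mul, (CFC.sqrt_nonneg A).posSemidef.1.eq, hA.1.eq, hB.1.eq,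
        mul_assoc] using h
    have h3 : (A * A * B * A * B * A * A).PosSemidef := by
      have h := Matrix.posSemidef_self_mul_conjTranspose (A * A * B * CFC.sqrt A)
      rw [show A * A * B * A * B * A * A
          = A * A * B * (CFC.sqrt A * CFC.sqrt A) * B * A * A by rw [CFC.sqrt_mul_sqrt_self A hA.nonneg]]
      simpa only [Matrix.conjTranspose_mul, (CFC.sqrt_nonneg A).posSemidef.1.eq, hA.1.eq, hB.1.eq,
        mul_assoc] using h
    rw [Matrix.trace_add, Matrix.trace_add]
    exact add_nonneg (add_nonneg (trPSD h1) (trPSD h2)) (trPSD h3)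
end

section
/- For any two complex n×n positive semidefinite matrices A and B, the trace of S_{7,3}(A,B), the sum of all words of length 7 in A and B containing exactly three B's, is nonnegative. -/
open Matrix ComplexOrder

private lemma rotTrace {n : ℕ} (l1 l2 : List (Matrix (Fin n) (Fin n) ℂ)) :
    ((l1 ++ l2).prod).trace = ((l2 ++ l1).prod).trace := by
  rw [List.prod_append, List.prod_append, Matrix.trace_mul_comm]

private lemma trNonneg {n : ℕ} (C : Matrix (Fin n) (Fin n) ℂ) : 0 ≤ (C * Cᴴ).trace := by
  rw [Matrix.trace]
  apply Finset.sum_nonneg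
  intro i _
  rw [Matrix.diag_apply, Matrix.mul_apply]
  apply Finset.sum_nonneg
  intro j _
  rw [Matrix.conjTranspose_apply, RCLike.star_def, Complex.mul_conj]
  exact_mod_cast Complex.normSq_nonneg _

private def wordList : List (Fin 7 → Bool) := [![true, true, true, false, false, false, false],
  ![true, true, false, true, false, false, false],
  ![true, true, false, false, true, false, false],
  ![true, true, false, false, false, true, false],
  ![true, true, false, false, false, false, true],
  ![true, false, true, true, false, false, false],
  ![true, false, true, false, true, false, false],
  ![true, false, true, false, false, true, false],
  ![true, false, true, false, false, false, true],
  ![true, false, false, true, true, false, false],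
  ![true, false, false, true, false, true, false],
  ![true, false, false, true, false, false, true],
  ![true, false, false, false, true, true, false],
  ![true, false, false, false, true, false, true],
  ![true, false, false, false, false, true, true],
  ![false, true, true, true, false, false, false],
  ![false, true, true, false, true, false, false],
  ![false, true, true, false, false, true, false],
  ![false, true, true, false, false, false, true],
  ![false, true, false, true, true, false, false],
  ![false, true, false, true, false, true, false],
  ![false, true, false, true, false, false, true],
  ![false, true, false, false, true, true, false],
  ![false, true, false, false, true, false, true],
  ![false, true, false, false, false, true, true],
  ![false, false, true, true, true, false, false],
  ![false, false, true, true, false, true, false],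
  ![false, false, true, true, false, false, true],
  ![false, false, true, false, true, true, false],
  ![false, false, true, false, true, false, true],
  ![false, false, true, false, false, true, true],
  ![false, false, false, true, true, true, false],
  ![false, false, false, true, true, false, true],
  ![false, false, false, true, false, true, true],
  ![false, false, false, false, true, true, true]]

theorem trace_S73_nonneg {n : ℕ} (A B : Matrix (Fin n) (Fin n) ℂ)
    (hA : A.PosSemidef) (hB : B.PosSemidef) :
    0 ≤ (hurwitz 7 3 A B).trace := by
  obtain ⟨b, hbH, hb⟩ : ∃ b, bᴴ = b ∧ b * b = B :=
    by
      open scoped MatrixOrder in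
      obtain ⟨X, hX, -, hXB⟩ :=
        CFC.exists_sqrt_of_isSelfAdjoint_of_quasispectrumRestricts hB.isHermitian
          (QuasispectrumRestricts.nnreal_of_nonneg hB.nonneg)
      exact ⟨X, hX, hXB⟩
  have hAH : Aᴴ = A := hA.1
  have hBH : Bᴴ = B := hB.1
  have h : hurwitz 7 3 A B = (B * (B * (B * (A * (A * (A * (A))))))) +
    ((B * (B * (A * (B * (A * (A * (A))))))) +
    ((B * (B * (A * (A * (B * (A * (A))))))) +
    ((B * (B * (A * (A * (A * (B * (A))))))) +
    ((B * (B * (A * (A * (A * (A * (B))))))) +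
    ((B * (A * (B * (B * (A * (A * (A))))))) +
    ((B * (A * (B * (A * (B * (A * (A))))))) +
    ((B * (A * (B * (A * (A * (B * (A))))))) +
    ((B * (A * (B * (A * (A * (A * (B))))))) +
    ((B * (A * (A * (B * (B * (A * (A))))))) +
    ((B * (A * (A * (B * (A * (B * (A))))))) +
    ((B * (A * (A * (B * (A * (A * (B))))))) +
    ((B * (A * (A * (A * (B * (B * (A))))))) +
    ((B * (A * (A * (A * (B * (A * (B))))))) +
    ((B * (A * (A * (A * (A * (B * (B))))))) +
    ((A * (B * (B * (B * (A * (A * (A))))))) +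
    ((A * (B * (B * (A * (B * (A * (A))))))) +
    ((A * (B * (B * (A * (A * (B * (A))))))) +
    ((A * (B * (B * (A * (A * (A * (B))))))) +
    ((A * (B * (A * (B * (B * (A * (A))))))) +
    ((A * (B * (A * (B * (A * (B * (A))))))) +
    ((A * (B * (A * (B * (A * (A * (B))))))) +
    ((A * (B * (A * (A * (B * (B * (A))))))) +
    ((A * (B * (A * (A * (B * (A * (B))))))) +
    ((A * (B * (A * (A * (A * (B * (B))))))) +
    ((A * (A * (B * (B * (B * (A * (A))))))) +
    ((A * (A * (B * (B * (A * (B * (A))))))) +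
    ((A * (A * (B * (B * (A * (A * (B))))))) +
    ((A * (A * (B * (A * (B * (B * (A))))))) +
    ((A * (A * (B * (A * (B * (A * (B))))))) +
    ((A * (A * (B * (A * (A * (B * (B))))))) +
    ((A * (A * (A * (B * (B * (B * (A))))))) +
    ((A * (A * (A * (B * (B * (A * (B))))))) +
    ((A * (A * (A * (B * (A * (B * (B))))))) +
    ((A * (A * (A * (A * (B * (B * (B))))))))))))))))))))))))))))))))))))))))) := by
    rw [hurwitz, show Finset.univ.filter
        (fun w : Fin 7 → Bool => (Finset.univ.filter (fun i => w i = true)).card = 3)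
          = wordList.toFinset from by decide,
      List.sum_toFinset _ (by decide)]
    simp [wordList, List.ofFn_succ, Matrix.cons_val_zero, Matrix.cons_val_one, Matrix.cons_val_succ]
  have e1 : (B * (B * (B * (A * (A * (A * (A))))))).trace = (B * (A * (A * (A * (A * (B * (B))))))).trace := by
    simpa using rotTrace [B, B] [B, A, A, A, A]
  have e2 : (B * (B * (A * (B * (A * (A * (A))))))).trace = (A * (B * (A * (A * (A * (B * (B))))))).trace := by
    simpa using rotTrace [B, B] [A, B, A, A, A]
  have e3 : (B * (B * (A * (A * (B * (A * (A))))))).trace = (A * (A * (B * (B * (A * (A * (B))))))).trace := by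
    simpa using rotTrace [B, B, A, A, B] [A, A]
  have e4 : (B * (B * (A * (A * (A * (B * (A))))))).trace = (B * (A * (A * (A * (B * (A * (B))))))).trace := by
    simpa using rotTrace [B] [B, A, A, A, B, A]
  have e5 : (B * (B * (A * (A * (A * (A * (B))))))).trace = (B * (A * (A * (A * (A * (B * (B))))))).trace := by
    simpa using rotTrace [B] [B, A, A, A, A, B]
  have e6 : (B * (A * (B * (B * (A * (A * (A))))))).trace = (B * (A * (A * (A * (B * (A * (B))))))).trace := by
    simpa using rotTrace [B, A, B] [B, A, A, A]
  have e7 : (B * (A * (B * (A * (B * (A * (A))))))).trace = (A * (B * (A * (A * (B * (A * (B))))))).trace := by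
    simpa using rotTrace [B, A, B] [A, B, A, A]
  have e8 : (B * (A * (B * (A * (A * (B * (A))))))).trace = (A * (B * (A * (A * (B * (A * (B))))))).trace := by
    simpa using rotTrace [B] [A, B, A, A, B, A]
  have e9 : (B * (A * (B * (A * (A * (A * (B))))))).trace = (A * (B * (A * (A * (A * (B * (B))))))).trace := by
    simpa using rotTrace [B] [A, B, A, A, A, B]
  have e10 : (B * (A * (A * (B * (B * (A * (A))))))).trace = (A * (A * (B * (B * (A * (A * (B))))))).trace := by
    simpa using rotTrace [B] [A, A, B, B, A, A]
  have e11 : (B * (A * (A * (B * (A * (B * (A))))))).trace = (A * (B * (A * (A * (B * (A * (B))))))).trace := by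
    simpa using rotTrace [B, A, A, B, A, B] [A]
  have e12 : (B * (A * (A * (B * (A * (A * (B))))))).trace = (A * (A * (B * (B * (A * (A * (B))))))).trace := by
    simpa using rotTrace [B, A, A, B] [A, A, B]
  have e13 : (B * (A * (A * (A * (B * (B * (A))))))).trace = (A * (B * (A * (A * (A * (B * (B))))))).trace := by
    simpa using rotTrace [B, A, A, A, B, B] [A]
  have e14 : (A * (B * (B * (B * (A * (A * (A))))))).trace = (B * (A * (A * (A * (A * (B * (B))))))).trace := by
    simpa using rotTrace [A, B, B] [B, A, A, A]
  have e15 : (A * (B * (B * (A * (B * (A * (A))))))).trace = (A * (B * (A * (A * (A * (B * (B))))))).trace := by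
    simpa using rotTrace [A, B, B] [A, B, A, A]
  have e16 : (A * (B * (B * (A * (A * (B * (A))))))).trace = (A * (A * (B * (B * (A * (A * (B))))))).trace := by
    simpa using rotTrace [A, B, B, A, A, B] [A]
  have e17 : (A * (B * (B * (A * (A * (A * (B))))))).trace = (B * (A * (A * (A * (B * (A * (B))))))).trace := by
    simpa using rotTrace [A, B] [B, A, A, A, B]
  have e18 : (A * (B * (A * (B * (B * (A * (A))))))).trace = (B * (A * (A * (A * (B * (A * (B))))))).trace := by
    simpa using rotTrace [A, B, A, B] [B, A, A]
  have e19 : (A * (B * (A * (B * (A * (B * (A))))))).trace = (A * (B * (A * (A * (B * (A * (B))))))).trace := by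
    simpa using rotTrace [A, B, A, B] [A, B, A]
  have e20 : (A * (B * (A * (B * (A * (A * (B))))))).trace = (A * (B * (A * (A * (B * (A * (B))))))).trace := by
    simpa using rotTrace [A, B] [A, B, A, A, B]
  have e21 : (A * (B * (A * (A * (B * (B * (A))))))).trace = (A * (A * (B * (B * (A * (A * (B))))))).trace := by
    simpa using rotTrace [A, B] [A, A, B, B, A]
  have e22 : (A * (A * (B * (B * (B * (A * (A))))))).trace = (B * (A * (A * (A * (A * (B * (B))))))).trace := by
    simpa using rotTrace [A, A, B, B] [B, A, A]
  have e23 : (A * (A * (B * (B * (A * (B * (A))))))).trace = (A * (B * (A * (A * (A * (B * (B))))))).trace := by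
    simpa using rotTrace [A, A, B, B] [A, B, A]
  have e24 : (A * (A * (B * (A * (B * (B * (A))))))).trace = (B * (A * (A * (A * (B * (A * (B))))))).trace := by
    simpa using rotTrace [A, A, B, A, B] [B, A]
  have e25 : (A * (A * (B * (A * (B * (A * (B))))))).trace = (A * (B * (A * (A * (B * (A * (B))))))).trace := by
    simpa using rotTrace [A, A, B, A, B] [A, B]
  have e26 : (A * (A * (B * (A * (A * (B * (B))))))).trace = (A * (A * (B * (B * (A * (A * (B))))))).trace := by
    simpa using rotTrace [A, A, B] [A, A, B, B]
  have e27 : (A * (A * (A * (B * (B * (B * (A))))))).trace = (B * (A * (A * (A * (A * (B * (B))))))).trace := by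
    simpa using rotTrace [A, A, A, B, B] [B, A]
  have e28 : (A * (A * (A * (B * (B * (A * (B))))))).trace = (A * (B * (A * (A * (A * (B * (B))))))).trace := by
    simpa using rotTrace [A, A, A, B, B] [A, B]
  have e29 : (A * (A * (A * (B * (A * (B * (B))))))).trace = (B * (A * (A * (A * (B * (A * (B))))))).trace := by
    simpa using rotTrace [A, A, A, B, A, B] [B]
  have e30 : (A * (A * (A * (A * (B * (B * (B))))))).trace = (B * (A * (A * (A * (A * (B * (B))))))).trace := by
    simpa using rotTrace [A, A, A, A, B, B] [B]
  have r1 : ((b * (A * (A * B))) * (b * (A * (A * B)))ᴴ).trace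
      = (A * (A * (B * (B * (A * (A * (B))))))).trace := by
    simp only [Matrix.conjTranspose_mul, hAH, hBH, hbH, Matrix.mul_assoc]
    rw [Matrix.trace_mul_comm]
    simp only [Matrix.mul_assoc, hb]
  have r2 : ((b * (A * (B * A)) + b * (B * (A * A))) * (b * (A * (B * A)) + b * (B * (A * A)))ᴴ).trace
      = (A * (B * (A * (A * (B * (A * (B))))))).trace + ((A * (B * (A * (A * (A * (B * (B))))))).trace + ((B * (A * (A * (A * (B * (A * (B))))))).trace + (B * (A * (A * (A * (A * (B * (B))))))).trace)) := by
    simp only [Matrix.conjTranspose_add, Matrix.conjTranspose_mul, hAH, hBH, hbH,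
      Matrix.add_mul, Matrix.mul_add, Matrix.trace_add, Matrix.mul_assoc]
    rw [Matrix.trace_mul_comm b, Matrix.trace_mul_comm b, Matrix.trace_mul_comm b,
      Matrix.trace_mul_comm b]
    simp only [Matrix.mul_assoc, hb]
    ring
  have key : (hurwitz 7 3 A B).trace
      = 7 * ((b * (A * (A * B))) * (b * (A * (A * B)))ᴴ).trace
        + 7 * ((b * (A * (B * A)) + b * (B * (A * A))) * (b * (A * (B * A)) + b * (B * (A * A)))ᴴ).trace := by
    rw [h]
    simp only [Matrix.trace_add]
    rw [e1, e2, e3, e4, e5, e6, e7, e8, e9, e10, e11, e12, e13, e14, e15, e16, e17, e18, e19, e20, e21, e22, e23, e24, e25, e26, e27, e28, e29, e30]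
    rw [r1, r2]
    ring
  rw [key]
  have h7 : (0:ℂ) ≤ 7 := by norm_num
  exact add_nonneg (mul_nonneg h7 (trNonneg _)) (mul_nonneg h7 (trNonneg _))
end

section
/- Let A, B be n×n complex positive semidefinite matrices with hermitian square roots a, b (a²=A, b²=B). For c₁, c₂ ∈ ℂ and C = c₁·aABb + c₂·aBAb, one has Tr(CC†) = |c₁|²·Tr(A³B³) + c₁c₂*·Tr(A²B²AB) + c₂c₁*·Tr(A²BAB²) + |c₂|²·Tr(ABABAB), and this is nonnegative. -/
open Matrix ComplexOrder

theorem trace_CCstar_p6_expansion {n : ℕ} (A B a b : Matrix (Fin n) (Fin n) ℂ)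
    (hA : A.PosSemidef) (hB : B.PosSemidef)
    (ha : a.IsHermitian) (ha2 : a * a = A)
    (hb : b.IsHermitian) (hb2 : b * b = B) (c₁ c₂ : ℂ)
    (C : Matrix (Fin n) (Fin n) ℂ)
    (hC : C = c₁ • (a * A * B * b) + c₂ • (a * B * A * b)) :
    (C * Cᴴ).trace =
        c₁ * star c₁ * (A * A * A * B * B * B).trace
        + c₁ * star c₂ * (A * A * B * B * A * B).trace
        + c₂ * star c₁ * (A * A * B * A * B * B).trace
        + c₂ * star c₂ * (A * B * A * B * A * B).trace ∧
    0 ≤ (C * Cᴴ).trace := by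
  have hAh : Aᴴ = A := hA.1
  have hBh : Bᴴ = B := hB.1
  have hbb : ∀ X : Matrix (Fin n) (Fin n) ℂ, b * (b * X) = B * X := by
    intro X; rw [← mul_assoc, hb2]
  have htr : 0 ≤ (C * Cᴴ).trace := by
    have hps := Matrix.posSemidef_self_mul_conjTranspose C
    rw [Matrix.trace]
    refine Finset.sum_nonneg fun i _ => ?_
    exact hps.diag_nonneg
  refine ⟨?_, htr⟩
  subst hC
  rw [Matrix.conjTranspose_add, Matrix.conjTranspose_smul, Matrix.conjTranspose_smul]
  simp only [Matrix.conjTranspose_mul, hAh, hBh, ha.eq, hb.eq]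
  simp only [Matrix.add_mul, Matrix.mul_add, smul_mul_assoc, mul_smul_comm,
    smul_smul, Matrix.trace_add, Matrix.trace_smul, smul_eq_mul]
  have t11 : ((a * A * B * b) * (b * (B * (A * a)))).trace
      = (A * A * A * B * B * B).trace := by
    simp only [mul_assoc, hbb]
    conv_lhs => rw [Matrix.trace_mul_comm]
    simp only [mul_assoc]; rw [ha2]
    conv_lhs => rw [Matrix.trace_mul_comm]
    simp only [mul_assoc]
    conv_lhs => rw [Matrix.trace_mul_comm]
    simp only [mul_assoc]
    conv_lhs => rw [Matrix.trace_mul_comm]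
    simp only [mul_assoc]
    conv_lhs => rw [Matrix.trace_mul_comm]
    simp only [mul_assoc]
  have t12 : ((a * A * B * b) * (b * (A * (B * a)))).trace
      = (A * A * B * B * A * B).trace := by
    simp only [mul_assoc, hbb]
    conv_lhs => rw [Matrix.trace_mul_comm]
    simp only [mul_assoc]; rw [ha2]
    conv_lhs => rw [Matrix.trace_mul_comm]
    simp only [mul_assoc]
    conv_lhs => rw [Matrix.trace_mul_comm]
    simp only [mul_assoc]
    conv_lhs => rw [Matrix.trace_mul_comm]
    simp only [mul_assoc]
    conv_lhs => rw [Matrix.trace_mul_comm]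
    simp only [mul_assoc]
    conv_lhs => rw [Matrix.trace_mul_comm]
    simp only [mul_assoc]
  have t21 : ((a * B * A * b) * (b * (B * (A * a)))).trace
      = (A * A * B * A * B * B).trace := by
    simp only [mul_assoc, hbb]
    conv_lhs => rw [Matrix.trace_mul_comm]
    simp only [mul_assoc]; rw [ha2]
    conv_lhs => rw [Matrix.trace_mul_comm]
    simp only [mul_assoc]
    conv_lhs => rw [Matrix.trace_mul_comm]
    simp only [mul_assoc]
    conv_lhs => rw [Matrix.trace_mul_comm]
    simp only [mul_assoc]
    conv_lhs => rw [Matrix.trace_mul_comm]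
    simp only [mul_assoc]
  have t22 : ((a * B * A * b) * (b * (A * (B * a)))).trace
      = (A * B * A * B * A * B).trace := by
    simp only [mul_assoc, hbb]
    conv_lhs => rw [Matrix.trace_mul_comm]
    simp only [mul_assoc]; rw [ha2]
    conv_lhs => rw [Matrix.trace_mul_comm]
    simp only [mul_assoc]
  rw [t11, t12, t21, t22]
  ring
end

section
/- For any complex n×n positive semidefinite matrices A and B, Tr(A³B³ + A²B²AB + A²BAB² + ABABAB) ≥ 0. -/
open Matrix ComplexOrder
open scoped MatrixOrder

private lemma psd_trace_nonneg {n : ℕ} {M : Matrix (Fin n) (Fin n) ℂ}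
    (hM : M.PosSemidef) : 0 ≤ M.trace := by
  rw [Matrix.trace]
  apply Finset.sum_nonneg
  intro i _
  exact hM.diag_nonneg

theorem trace_p6_sum_nonneg {n : ℕ} (A B : Matrix (Fin n) (Fin n) ℂ)
    (hA : A.PosSemidef) (hB : B.PosSemidef) :
    0 ≤ (A * A * A * B * B * B + A * A * B * B * A * B
        + A * A * B * A * B * B + A * B * A * B * A * B).trace := by
  set a := CFC.sqrt A with ha_def
  set b := CFC.sqrt B with hb_def
  have haa : a * a = A := CFC.sqrt_mul_sqrt_self A hA.nonneg
  have hbb : b * b = B := CFC.sqrt_mul_sqrt_self B hB.nonneg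
  have haH : aᴴ = a := (CFC.sqrt_nonneg A).posSemidef.1.eq
  have hbH : bᴴ = b := (CFC.sqrt_nonneg B).posSemidef.1.eq
  have hAH : Aᴴ = A := hA.1.eq
  have hBH : Bᴴ = B := hB.1.eq
  set C := a * (A * B + B * A) * b with hC_def
  have key : (A * A * A * B * B * B + A * A * B * B * A * B
        + A * A * B * A * B * B + A * B * A * B * A * B).trace = (C * Cᴴ).trace := by
    have hCH : Cᴴ = b * (B * A + A * B) * a := by
      simp [hC_def, conjTranspose_mul, conjTranspose_add, haH, hbH, hAH, hBH, mul_assoc]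
    rw [hCH]
    have : C * (b * (B * A + A * B) * a)
        = a * ((A * B + B * A) * B * (B * A + A * B)) * a := by
      rw [hC_def]
      have : (a * (A * B + B * A) * b) * (b * (B * A + A * B) * a)
          = a * ((A * B + B * A) * (b * b) * (B * A + A * B)) * a := by
        noncomm_ring
      rw [this, hbb]
    rw [this]
    rw [trace_mul_comm, ← mul_assoc a a, haa]
    have expand : A * ((A * B + B * A) * B * (B * A + A * B))
        = A * (A * B * B * B * A) + A * (A * B * B * A * B)
        + A * (B * A * B * B * A) + A * (B * A * B * A * B) := by
      noncomm_ring
    rw [expand]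
    simp only [trace_add]
    rw [show A * (A * B * B * B * A) = (A * A * B * B * B) * A by noncomm_ring,
      trace_mul_comm (A * A * B * B * B),
      show A * (A * A * B * B * B) = A * A * A * B * B * B by noncomm_ring]
    rw [show A * (A * B * B * A * B) = A * A * B * B * A * B by noncomm_ring]
    rw [show A * (B * A * B * B * A) = (A * B * A * B * B) * A by noncomm_ring,
      trace_mul_comm (A * B * A * B * B),
      show A * (A * B * A * B * B) = A * A * B * A * B * B by noncomm_ring]
    rw [show A * (B * A * B * A * B) = (A * B * A * B) * (A * B) by noncomm_ring,
      trace_mul_comm (A * B * A * B),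
      show A * B * (A * B * A * B) = A * B * A * B * A * B by noncomm_ring]
  rw [key]
  exact psd_trace_nonneg (posSemidef_self_mul_conjTranspose C)
end
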